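/- Let N = (n_ij) ∈ SL(2,ℤ) have real eigenvalues α > 1 and 1/α, and let p, q, r be integers with r ≠ 0, and set G = G⁺_{N,p,q,r}. Then Γ_G equals the subgroup of G generated by g₁, g₂, g₃, and the quotient group G/Γ_G is infinite cyclic, generated by the class of g₀. -/

import Mathlib

/-- The relations of the group `G⁺_{N,p,q,r}` attached to an Inoue surface of type `S⁺`:
generators `g₀,g₁,g₂,g₃` (indexed by `Fin 4`) and relations
`g₀g₁g₀⁻¹ = g₁^{n₁₁} g₂^{n₁₂} g₃^{p}`, `g₀g₂g₀⁻¹ = g₁^{n₂₁} g₂^{n₂₂} g₃^{q}`,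
`g₁g₂g₁⁻¹g₂⁻¹ = g₃^{r}` and `g₃gᵢ = gᵢg₃` for `i = 0,1,2`. -/
def gplusRels (N : Matrix (Fin 2) (Fin 2) ℤ) (p q r : ℤ) : Set (FreeGroup (Fin 4)) :=
  { FreeGroup.of 0 * FreeGroup.of 1 * (FreeGroup.of 0)⁻¹ *
      ((FreeGroup.of 1) ^ N 0 0 * (FreeGroup.of 2) ^ N 0 1 * (FreeGroup.of 3) ^ p)⁻¹,
    FreeGroup.of 0 * FreeGroup.of 2 * (FreeGroup.of 0)⁻¹ *
      ((FreeGroup.of 1) ^ N 1 0 * (FreeGroup.of 2) ^ N 1 1 * (FreeGroup.of 3) ^ q)⁻¹,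
    FreeGroup.of 1 * FreeGroup.of 2 * (FreeGroup.of 1)⁻¹ * (FreeGroup.of 2)⁻¹ *
      ((FreeGroup.of 3) ^ r)⁻¹,
    FreeGroup.of 3 * FreeGroup.of 0 * (FreeGroup.of 3)⁻¹ * (FreeGroup.of 0)⁻¹,
    FreeGroup.of 3 * FreeGroup.of 1 * (FreeGroup.of 3)⁻¹ * (FreeGroup.of 1)⁻¹,
    FreeGroup.of 3 * FreeGroup.of 2 * (FreeGroup.of 3)⁻¹ * (FreeGroup.of 2)⁻¹ }

/-- The group `G⁺_{N,p,q,r}`. -/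
abbrev Gplus (N : Matrix (Fin 2) (Fin 2) ℤ) (p q r : ℤ) := PresentedGroup (gplusRels N p q r)

/-- For a group `G`, `GammaSub G` is the normal subgroup
`Γ_G = {g ∈ G : g mod [G,G] is of finite order}`. -/
def GammaSub (G : Type*) [Group G] : Subgroup G :=
  Subgroup.comap (Abelianization.of : G →* Abelianization G)
    (CommGroup.torsion (Abelianization G))

instance GammaSub.normal (G : Type*) [Group G] : (GammaSub G).Normal :=
  Subgroup.Normal.comap inferInstance _

/-!
Let `ψ : G → ℤ` send `g₀ ↦ 1` and `g₁, g₂, g₃ ↦ 0`, and let `H = ⟨g₁, g₂, g₃⟩`. Since `ℤ` is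
torsion-free, `Γ_G ≤ ker ψ`. In the abelianization `g₃ʳ = 1`, and the relations say that
`(N - 1)` kills `(g₁, g₂)` modulo `⟨g₃⟩`; as `α > 1` forces `tr N > 2`, we get
`det (N - 1) = 2 - tr N ≠ 0`, so `g₁, g₂, g₃` are torsion there and `H ≤ Γ_G`.
Modulo the central subgroup `⟨g₃⟩` the elements `g₁, g₂` commute and conjugation by `g₀` acts on
them through `N`, which is invertible over `ℤ`; hence conjugation by `g₀` maps `H` onto `H`, so `H`
is normal, `G/H` is generated by the image of `g₀`, and `ker ψ ≤ H`. Thus `Γ_G = H = ker ψ`, and `ψ`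
identifies `G/Γ_G` with `ℤ`, sending the class of `g₀` to `1`.
-/

open PresentedGroup
open scoped commutatorElement

section GroupTheory

variable {G : Type*} [Group G]

theorem Subgroup.normal_of_le_center {H : Subgroup G} (h : H ≤ Subgroup.center G) : H.Normal :=
  ⟨fun n hn g => by rwa [(Subgroup.mem_center_iff.1 (h hn) g), mul_inv_cancel_right]⟩

theorem Commute.mem_closure_of_det_eq_one {x y : G} (hxy : Commute x y) {a b c d : ℤ}
    (hdet : a * d - b * c = 1) :
    x ∈ Subgroup.closure {x ^ a * y ^ b, x ^ c * y ^ d} ∧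
      y ∈ Subgroup.closure {x ^ a * y ^ b, x ^ c * y ^ d} := by
  have combo : ∀ m n : ℤ,
      (x ^ a * y ^ b) ^ m * (x ^ c * y ^ d) ^ n = x ^ (a * m + c * n) * y ^ (b * m + d * n) := by
    intro m n
    have hc : ∀ s t : ℤ, Commute (x ^ s) (y ^ t) := hxy.zpow_zpow
    rw [(hc a b).mul_zpow, (hc c d).mul_zpow, ← zpow_mul, ← zpow_mul, ← zpow_mul, ← zpow_mul,
      mul_assoc, ← mul_assoc (y ^ _), ← (hc _ _).eq, zpow_add, zpow_add]
    group
  have hu : x ^ a * y ^ b ∈ Subgroup.closure {x ^ a * y ^ b, x ^ c * y ^ d} :=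
    Subgroup.subset_closure (by simp)
  have hv : x ^ c * y ^ d ∈ Subgroup.closure {x ^ a * y ^ b, x ^ c * y ^ d} :=
    Subgroup.subset_closure (by simp)
  constructor
  · have h := mul_mem (zpow_mem hu d) (zpow_mem hv (-b))
    rwa [combo, show a * d + c * -b = 1 by linarith, show b * d + d * -b = 0 by ring, zpow_one,
      zpow_zero, mul_one] at h
  · have h := mul_mem (zpow_mem hu (-c)) (zpow_mem hv a)
    rwa [combo, show a * -c + c * a = 0 by ring, show b * -c + d * a = 1 by linarith, zpow_one,
      zpow_zero, one_mul] at h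

theorem gammaSub_le_ker {A : Type*} [CommGroup A] [IsMulTorsionFree A] (f : G →* A) :
    GammaSub G ≤ f.ker := fun x hx => by
  rw [MonoidHom.mem_ker, ← Abelianization.lift_apply_of]
  exact ((Abelianization.lift f).isOfFinOrder hx).eq_one'

end GroupTheory

theorem CommGroup.isOfFinOrder_of_eq_zpow_mul_zpow_mul_zpow {A : Type*} [CommGroup A] {x y z : A}
    {a b c d p q r : ℤ} (hx : x = x ^ a * y ^ b * z ^ p) (hy : y = x ^ c * y ^ d * z ^ q)
    (hz : z ^ r = 1) (hr : r ≠ 0) (hdet : (a - 1) * (d - 1) - b * c ≠ 0) :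
    IsOfFinOrder x ∧ IsOfFinOrder y ∧ IsOfFinOrder z := by
  have ex := congrArg Additive.ofMul hx
  have ey := congrArg Additive.ofMul hy
  simp only [ofMul_mul, ofMul_zpow] at ex ey
  have hX : x ^ ((a - 1) * (d - 1) - b * c) = z ^ (b * q - (d - 1) * p) := by
    apply Additive.ofMul.injective
    simp only [ofMul_zpow]
    linear_combination (norm := module) (-(d - 1)) • ex + b • ey
  have hY : y ^ ((a - 1) * (d - 1) - b * c) = z ^ (c * p - (a - 1) * q) := by
    apply Additive.ofMul.injective
    simp only [ofMul_zpow]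
    linear_combination (norm := module) c • ex + (-(a - 1)) • ey
  have of_zpow_eq {w : A} {k : ℤ} (hw : w ^ ((a - 1) * (d - 1) - b * c) = z ^ k) :
      IsOfFinOrder w :=
    isOfFinOrder_iff_zpow_eq_one.2 ⟨_, mul_ne_zero hdet hr, by
      rw [zpow_mul, hw, ← zpow_mul, mul_comm, zpow_mul, hz, one_zpow]⟩
  exact ⟨of_zpow_eq hX, of_zpow_eq hY, isOfFinOrder_iff_zpow_eq_one.2 ⟨r, hr, hz⟩⟩

theorem two_lt_add_one_div {K : Type*} [Field K] [LinearOrder K] [IsStrictOrderedRing K] {a : K}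
    (h : 1 < a) : 2 < a + 1 / a := by
  have ha : 0 < a := by linarith
  rw [← sub_pos, show a + 1 / a - 2 = (a - 1) ^ 2 / a by field_simp; ring]
  exact div_pos (pow_pos (sub_pos.2 h) 2) ha

theorem Matrix.det_sub_one_fin_two {R : Type*} [CommRing R] (A : Matrix (Fin 2) (Fin 2) R) :
    (A - 1).det = (A 0 0 - 1) * (A 1 1 - 1) - A 0 1 * A 1 0 := by
  simp [Matrix.det_fin_two]

namespace Gplus

variable {N : Matrix (Fin 2) (Fin 2) ℤ} {p q r : ℤ}

theorem conj_of_one : (of 0 * of 1 * (of 0)⁻¹ : Gplus N p q r) =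
    of 1 ^ N 0 0 * of 2 ^ N 0 1 * of 3 ^ p :=
  mk_eq_mk_of_mul_inv_mem (by simp [gplusRels])

theorem conj_of_two : (of 0 * of 2 * (of 0)⁻¹ : Gplus N p q r) =
    of 1 ^ N 1 0 * of 2 ^ N 1 1 * of 3 ^ q :=
  mk_eq_mk_of_mul_inv_mem (by simp [gplusRels])

theorem commutator_of_one_of_two : ⁅(of 1 : Gplus N p q r), (of 2 : Gplus N p q r)⁆ = of 3 ^ r :=
  mk_eq_mk_of_mul_inv_mem (by simp [gplusRels])

theorem of_three_mem_center : (of 3 : Gplus N p q r) ∈ Subgroup.center (Gplus N p q r) := by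
  have hgen (i : Fin 4) : (of 3 * of i * (of 3)⁻¹ : Gplus N p q r) = of i := by
    fin_cases i
    iterate 3 exact mk_eq_mk_of_mul_inv_mem (by simp [gplusRels])
    exact mul_inv_cancel_right _ _
  refine Subgroup.mem_center_iff.2 fun g => ?_
  have hg : g ∈ Subgroup.centralizer {(of 3 : Gplus N p q r)} := generated_by _ _ (fun i =>
    Subgroup.mem_centralizer_singleton_iff.2 (mul_inv_eq_iff_eq_mul.1 (hgen i)).symm) g
  exact Subgroup.mem_centralizer_singleton_iff.1 hg

theorem zpowers_of_three_normal : (Subgroup.zpowers (of 3 : Gplus N p q r)).Normal :=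
  Subgroup.normal_of_le_center (Subgroup.zpowers_le.2 of_three_mem_center)

def degree : Gplus N p q r →* Multiplicative ℤ :=
  toGroup (f := Pi.mulSingle 0 (.ofAdd 1)) (by simp [gplusRels])

theorem degree_of (i : Fin 4) :
    degree (of i : Gplus N p q r) = Pi.mulSingle (M := fun _ => Multiplicative ℤ) 0 (.ofAdd 1) i :=
  toGroup.of _

theorem mk'_eq_zpow_degree (K : Subgroup (Gplus N p q r)) [K.Normal]
    (hK : Subgroup.closure {of 1, of 2, of 3} ≤ K) (x : Gplus N p q r) :
    QuotientGroup.mk' K x = QuotientGroup.mk' K (of 0) ^ (degree x).toAdd := by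
  have hgen : ∀ i ≠ 0, QuotientGroup.mk' K (of i) = 1 := fun i hi =>
    (QuotientGroup.eq_one_iff _).2 (hK (Subgroup.subset_closure (by fin_cases i <;> simp_all)))
  refine DFunLike.congr_fun (PresentedGroup.ext (φ := QuotientGroup.mk' K)
    (ψ := (zpowersHom _ (QuotientGroup.mk' K (of 0))).comp degree) fun i => ?_) x
  by_cases hi : i = 0
  · simp [hi, degree_of]
  · simp [hi, hgen, degree_of]

theorem ker_degree_le (K : Subgroup (Gplus N p q r)) [K.Normal]
    (hK : Subgroup.closure {of 1, of 2, of 3} ≤ K) : degree.ker ≤ K := fun x hx => by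
  rw [← QuotientGroup.eq_one_iff, ← QuotientGroup.mk'_apply, mk'_eq_zpow_degree K hK, hx,
    toAdd_one, zpow_zero]

theorem closure_le_gammaSub (hfix : (N - 1).det ≠ 0) (hr : r ≠ 0) :
    Subgroup.closure {of 1, of 2, of 3} ≤ GammaSub (Gplus N p q r) := by
  let ab := Abelianization.of (G := Gplus N p q r)
  have ab_conj (g h : Gplus N p q r) : ab (g * h * g⁻¹) = ab h := by
    rw [map_mul, map_mul, map_inv, mul_inv_cancel_comm]
  have h1 := congrArg ab (@conj_of_one N p q r)
  have h2 := congrArg ab (@conj_of_two N p q r)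
  have h3 := congrArg ab (@commutator_of_one_of_two N p q r)
  rw [ab_conj, map_mul, map_mul, map_zpow, map_zpow, map_zpow] at h1 h2
  rw [map_commutatorElement, commutatorElement_eq_one_iff_commute.2 (Commute.all _ _),
    map_zpow] at h3
  rw [Matrix.det_sub_one_fin_two] at hfix
  obtain ⟨t1, t2, t3⟩ :=
    CommGroup.isOfFinOrder_of_eq_zpow_mul_zpow_mul_zpow h1 h2 h3.symm hr hfix
  simpa [Set.insert_subset_iff] using ⟨t1, t2, t3⟩

theorem closure_le_closure_conj (hN : N.det = 1) :
    Subgroup.closure {of 1, of 2, of 3} ≤ Subgroup.closure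
      {of 1 ^ N 0 0 * of 2 ^ N 0 1 * of 3 ^ p, of 1 ^ N 1 0 * of 2 ^ N 1 1 * of 3 ^ q,
        (of 3 : Gplus N p q r)} := by
  set K : Subgroup (Gplus N p q r) := Subgroup.closure
    {of 1 ^ N 0 0 * of 2 ^ N 0 1 * of 3 ^ p, of 1 ^ N 1 0 * of 2 ^ N 1 1 * of 3 ^ q, of 3}
  have h3K : of 3 ∈ K := Subgroup.subset_closure (by simp)
  have := @zpowers_of_three_normal N p q r
  let π := QuotientGroup.mk' (Subgroup.zpowers (of 3 : Gplus N p q r))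
  have hπ3 : π (of 3) = 1 := (QuotientGroup.eq_one_iff _).2 (Subgroup.mem_zpowers _)
  have hK : (K.map π).comap π = K := by
    rw [Subgroup.comap_map_eq, QuotientGroup.ker_mk', sup_eq_left]
    exact Subgroup.zpowers_le.2 h3K
  have hcomm : Commute (π (of 1)) (π (of 2)) := by
    rw [← commutatorElement_eq_one_iff_commute, ← map_commutatorElement, commutator_of_one_of_two,
      map_zpow, hπ3, one_zpow]
  have hdet : N 0 0 * N 1 1 - N 0 1 * N 1 0 = 1 := by rwa [Matrix.det_fin_two] at hN
  have hmap : Subgroup.closure {π (of 1) ^ N 0 0 * π (of 2) ^ N 0 1,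
      π (of 1) ^ N 1 0 * π (of 2) ^ N 1 1} ≤ K.map π := by
    rw [MonoidHom.map_closure]
    refine Subgroup.closure_mono ?_
    simp [Set.image_insert_eq, hπ3, Set.insert_subset_iff]
  obtain ⟨h1, h2⟩ := hcomm.mem_closure_of_det_eq_one hdet
  rw [Subgroup.closure_le, ← hK]
  simp only [Set.insert_subset_iff, Set.singleton_subset_iff, SetLike.mem_coe, Subgroup.mem_comap]
  exact ⟨hmap h1, hmap h2, Subgroup.mem_map_of_mem π h3K⟩

theorem closure_of_one_of_two_of_three_normal (hN : N.det = 1) :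
    (Subgroup.closure {of 1, of 2, of 3} : Subgroup (Gplus N p q r)).Normal := by
  set H : Subgroup (Gplus N p q r) := Subgroup.closure {of 1, of 2, of 3}
  have hgen (i : Fin 4) (hi : i ≠ 0) : of i ∈ H :=
    Subgroup.subset_closure (by fin_cases i <;> simp_all)
  have hconj3 : (of 0 * of 3 * (of 0)⁻¹ : Gplus N p q r) = of 3 := by
    rw [Subgroup.mem_center_iff.1 of_three_mem_center, mul_inv_cancel_right]
  have hmap : H.map (MulAut.conj (of 0 : Gplus N p q r) : Gplus N p q r →* Gplus N p q r) = H := by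
    rw [MonoidHom.map_closure]
    simp only [Set.image_insert_eq, Set.image_singleton, MonoidHom.coe_coe, MulAut.conj_apply,
      conj_of_one, conj_of_two, hconj3]
    refine le_antisymm ((Subgroup.closure_le _).2 ?_) (closure_le_closure_conj hN)
    simp only [Set.insert_subset_iff, Set.singleton_subset_iff, SetLike.mem_coe]
    have hmem (n₁ n₂ n₃ : ℤ) : of 1 ^ n₁ * of 2 ^ n₂ * of 3 ^ n₃ ∈ H :=
      mul_mem (mul_mem (zpow_mem (hgen 1 (by decide)) _) (zpow_mem (hgen 2 (by decide)) _))
        (zpow_mem (hgen 3 (by decide)) _)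
    exact ⟨hmem _ _ _, hmem _ _ _, hgen 3 (by decide)⟩
  rw [← Subgroup.normalizer_eq_top_iff, eq_top_iff]
  rintro x -
  refine generated_by _ _ (fun i => ?_) x
  by_cases hi : i = 0
  · exact hi ▸ Subgroup.mem_normalizer_iff_map_conj_eq.2 hmap
  · exact Subgroup.le_normalizer (hgen i hi)

end Gplus

/-- For `G = G⁺_{N,p,q,r}` (with `N ∈ SL(2,ℤ)` having eigenvalues `α > 1, 1/α`, `r ≠ 0`),
`Γ_G` is the subgroup generated by `g₁,g₂,g₃`, and `G/Γ_G` is infinite cyclic,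
generated by the class of `g₀`. -/
theorem stmt_2 (N : Matrix (Fin 2) (Fin 2) ℤ) (hN : N.det = 1)
    (hα : ∃ α : ℝ, 1 < α ∧ ((N 0 0 : ℝ) + (N 1 1 : ℝ)) = α + 1 / α)
    (p q r : ℤ) (hr : r ≠ 0) :
    GammaSub (Gplus N p q r) =
      Subgroup.closure {PresentedGroup.of 1, PresentedGroup.of 2, PresentedGroup.of 3} ∧
    Subgroup.zpowers
        (QuotientGroup.mk' (GammaSub (Gplus N p q r)) (PresentedGroup.of 0)) = ⊤ ∧
    ¬ IsOfFinOrder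
        (QuotientGroup.mk' (GammaSub (Gplus N p q r)) (PresentedGroup.of 0)) := by
  have htr : 2 < N 0 0 + N 1 1 := by
    obtain ⟨α, hα1, hsum⟩ := hα
    exact_mod_cast hsum ▸ two_lt_add_one_div hα1
  have hfix : (N - 1).det ≠ 0 := by
    rw [Matrix.det_sub_one_fin_two]
    rw [Matrix.det_fin_two] at hN
    intro h
    linarith
  set Γ := GammaSub (Gplus N p q r)
  set H : Subgroup (Gplus N p q r) := Subgroup.closure {of 1, of 2, of 3}
  have : H.Normal := Gplus.closure_of_one_of_two_of_three_normal hN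
  have hHΓ : H ≤ Γ := Gplus.closure_le_gammaSub hfix hr
  have hΓ_le_ker : Γ ≤ Gplus.degree.ker := gammaSub_le_ker _
  refine ⟨le_antisymm (hΓ_le_ker.trans (Gplus.ker_degree_le H le_rfl)) hHΓ, ?_, fun hfin => ?_⟩
  · rw [eq_top_iff]
    rintro x -
    obtain ⟨x, rfl⟩ := QuotientGroup.mk'_surjective Γ x
    rw [Gplus.mk'_eq_zpow_degree Γ hHΓ x]
    exact Subgroup.zpow_mem_zpowers _ _
  · have := ((QuotientGroup.lift Γ Gplus.degree hΓ_le_ker).isOfFinOrder hfin).eq_one'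
    simp [Gplus.degree_of] at this
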